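/- arXiv:2006.08374 — 3 statements merged into one kernel-verified Lean document; each statement's English description precedes it below -/
import Mathlib

section
/- For all real c ≥ 2√μ with μ > 0, and all real U, V, χ with 0 ≤ U ≤ βV ≤ 1 (β > 0) and 0 ≤ χ ≤ μ, the discriminant inequality ((U - βV)·χ/c - c)² ≥ 4μ(1 - U) holds. -/
theorem discriminant_inequality (μ β c U V χ : ℝ)
    (hμ : 0 < μ) (hβ : 0 < β) (hc : 2 * Real.sqrt μ ≤ c)
    (hU0 : 0 ≤ U) (hUV : U ≤ β * V) (hV1 : β * V ≤ 1)
    (hχ0 : 0 ≤ χ) (hχμ : χ ≤ μ) :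
    ((U - β * V) * χ / c - c) ^ 2 ≥ 4 * μ * (1 - U) := by
  have hs : 0 < Real.sqrt μ := Real.sqrt_pos.mpr hμ
  have hcpos : 0 < c := lt_of_lt_of_le (by linarith) hc
  have ht : (U - β * V) * χ / c ≤ 0 :=
    div_nonpos_of_nonpos_of_nonneg (mul_nonpos_of_nonpos_of_nonneg (by linarith) hχ0) hcpos.le
  have h1 : ((U - β * V) * χ / c - c) ^ 2 ≥ c ^ 2 := by nlinarith
  have h2 : c ^ 2 ≥ 4 * μ := by
    have := Real.sq_sqrt hμ.le
    nlinarith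
  nlinarith
end

section
/- Let μ, β, D > 0, c ≥ 2 max(√μ, √(Dβ)), and suppose 0 ≤ U ≤ βV ≤ 1, 0 ≤ χ ≤ μ, and ρ(U − βV) ≤ Y ≤ 0 where ρ = (c − √(c² − 4Dβ))/(2Dβ). Then η_crit := c/2 − χY/2 satisfies 0 ≤ η_crit < c. -/
theorem eta_crit_bounds_diffusive (μ β D c U V Y χ : ℝ)
    (hμ : 0 < μ) (hβ : 0 < β) (hD : 0 < D)
    (hc : 2 * max (Real.sqrt μ) (Real.sqrt (D * β)) ≤ c)
    (hU0 : 0 ≤ U) (hUV : U ≤ β * V) (hV1 : β * V ≤ 1)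
    (hχ0 : 0 ≤ χ) (hχμ : χ ≤ μ)
    (hY1 : (c - Real.sqrt (c ^ 2 - 4 * D * β)) / (2 * D * β) * (U - β * V) ≤ Y)
    (hY2 : Y ≤ 0) :
    0 ≤ c / 2 - χ * Y / 2 ∧ c / 2 - χ * Y / 2 < c := by
  have hsqμ : Real.sqrt μ ≤ max (Real.sqrt μ) (Real.sqrt (D * β)) := le_max_left _ _
  have hsqDβ : Real.sqrt (D * β) ≤ max (Real.sqrt μ) (Real.sqrt (D * β)) := le_max_right _ _
  have hsμ0 : 0 < Real.sqrt μ := Real.sqrt_pos.mpr hμ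
  have hc0 : 0 < c := lt_of_lt_of_le (by nlinarith) hc
  have hcμ : 2 * Real.sqrt μ ≤ c := by nlinarith
  have hcDβ : 2 * Real.sqrt (D * β) ≤ c := by nlinarith
  have hμsq : Real.sqrt μ ^ 2 = μ := Real.sq_sqrt hμ.le
  have hDβsq : Real.sqrt (D * β) ^ 2 = D * β := Real.sq_sqrt (by positivity)
  have h4μ : 4 * μ ≤ c ^ 2 := by nlinarith [Real.sqrt_nonneg μ]
  have h4Dβ : 4 * (D * β) ≤ c ^ 2 := by nlinarith [Real.sqrt_nonneg (D * β)]
  set s := Real.sqrt (c ^ 2 - 4 * D * β) with hs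
  have hs0 : 0 ≤ s := Real.sqrt_nonneg _
  have hs2 : s ^ 2 = c ^ 2 - 4 * D * β := Real.sq_sqrt (by nlinarith)
  have hsc : s ≤ c := by nlinarith
  have hDβ0 : 0 < 2 * D * β := by positivity
  have hY1' : (c - s) * (U - β * V) ≤ Y * (2 * D * β) := by
    rw [div_mul_eq_mul_div, div_le_iff₀ hDβ0] at hY1
    linarith
  clear_value s
  clear hs hY1 hc hsqμ hsqDβ hsμ0 hcμ hcDβ hμsq hDβsq
  -- key: c * (c - s) ≤ 4 D β  since c s ≥ s^2 = c^2 - 4Dβ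
  have hkey : c * (c - s) ≤ 4 * (D * β) := by nlinarith
  -- 2Dβ(-Y) ≤ (c - s)(βV - U) ≤ c - s
  have hnY : 2 * D * β * (-Y) ≤ (c - s) * (β * V - U) := by nlinarith
  have h1 : (c - s) * (β * V - U) ≤ c - s :=
    mul_le_of_le_one_right (by linarith) (by linarith)
  have h2 : 2 * D * β * (-Y) ≤ c - s := le_trans hnY h1
  have h3 : χ * (2 * D * β * (-Y)) ≤ μ * (c - s) :=
    mul_le_mul hχμ h2 (by nlinarith) hμ.le
  have hmain : χ * (-Y) ≤ c / 2 := by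
    have h5 : χ * (2 * D * β * (-Y)) * c ≤ μ * (c - s) * c :=
      mul_le_mul_of_nonneg_right h3 hc0.le
    have h6 : μ * (c - s) * c ≤ μ * (4 * (D * β)) := by nlinarith
    have h7 : μ * (4 * (D * β)) ≤ c / 2 * (2 * D * β * c) := by
      have h := mul_le_mul_of_nonneg_right h4μ (le_of_lt (mul_pos hD hβ))
      calc μ * (4 * (D * β)) = 4 * μ * (D * β) := by ring
        _ ≤ c ^ 2 * (D * β) := h
        _ = c / 2 * (2 * D * β * c) := by ring
    have h8 : χ * (-Y) * (2 * D * β * c) ≤ c / 2 * (2 * D * β * c) :=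
      calc χ * (-Y) * (2 * D * β * c) = χ * (2 * D * β * (-Y)) * c := by ring
        _ ≤ μ * (c - s) * c := h5
        _ ≤ μ * (4 * (D * β)) := h6
        _ ≤ c / 2 * (2 * D * β * c) := h7
    have hpos : 0 < 2 * D * β * c := by positivity
    exact le_of_mul_le_mul_right h8 hpos
  rw [mul_neg] at hmain
  have hχY0 : χ * Y ≤ 0 := mul_nonpos_of_nonneg_of_nonpos hχ0 hY2
  constructor
  · linarith
  · linarith
end

section
/- Let β, c, D, ρ > 0 with Dβρ² − cρ + 1 = 0, and let U, V, W, χ, Y be reals with 0 ≤ U, 0 ≤ W ≤ cU, Y ≤ 0, χ ≥ 0, and Y = ρ(U − βV). Then −cY/D + (U − βV)/D − ρ(−cU + UχY + W − βY) ≥ 0. -/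
/-! Substituting `U - βV = Y/ρ`, the terms linear in `Y` carry the coefficient
`βρ + 1/(Dρ) - c/D = (Dβρ² - cρ + 1)/(Dρ)`, which vanishes because `ρ` is a root of the
characteristic quadratic; what remains is `-ρ (W - cU + UχY)`, nonnegative term by term. -/

lemma root_coeff_eq_zero {β c D ρ : ℝ} (hD : D ≠ 0) (hρ : ρ ≠ 0)
    (hroot : D * β * ρ ^ 2 - c * ρ + 1 = 0) :
    β * ρ + 1 / (D * ρ) - c / D = 0 := by
  field_simp
  linear_combination hroot

lemma face_expression_eq {β c D ρ U V W χ Y : ℝ} (hρ : ρ ≠ 0)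
    (hface : Y = ρ * (U - β * V)) :
    -c * Y / D + (U - β * V) / D - ρ * (-c * U + U * χ * Y + W - β * Y) =
      (β * ρ + 1 / (D * ρ) - c / D) * Y - ρ * (W - c * U + U * χ * Y) := by
  have hUV : U - β * V = Y / ρ := by
    rw [hface]
    field_simp
  rw [hUV]
  ring

lemma neg_mul_flux_nonneg {c ρ U W χ Y : ℝ} (hρ : 0 ≤ ρ) (hU : 0 ≤ U) (hWcU : W ≤ c * U)
    (hY : Y ≤ 0) (hχ : 0 ≤ χ) :
    0 ≤ -(ρ * (W - c * U + U * χ * Y)) := by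
  have hUχY : U * χ * Y ≤ 0 := mul_nonpos_of_nonneg_of_nonpos (mul_nonneg hU hχ) hY
  rw [neg_nonneg]
  exact mul_nonpos_of_nonneg_of_nonpos hρ (by linarith)

theorem face_Y_computation_general (β c D ρ U V W χ Y : ℝ)
    (hD : 0 < D) (hρ : 0 < ρ)
    (hroot : D * β * ρ ^ 2 - c * ρ + 1 = 0)
    (hU0 : 0 ≤ U) (hWcU : W ≤ c * U)
    (hY0 : Y ≤ 0) (hχ0 : 0 ≤ χ) (hface : Y = ρ * (U - β * V)) :
    -c * Y / D + (U - β * V) / D - ρ * (-c * U + U * χ * Y + W - β * Y) ≥ 0 := by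
  rw [ge_iff_le, face_expression_eq hρ.ne' hface, root_coeff_eq_zero hD.ne' hρ.ne' hroot,
    zero_mul, zero_sub]
  exact neg_mul_flux_nonneg hρ.le hU0 hWcU hY0 hχ0

theorem face_Y_computation (β c D ρ U V W χ Y : ℝ)
    (hβ : 0 < β) (hc : 0 < c) (hD : 0 < D) (hρ : 0 < ρ)
    (hroot : D * β * ρ ^ 2 - c * ρ + 1 = 0)
    (hU0 : 0 ≤ U) (hW0 : 0 ≤ W) (hWcU : W ≤ c * U)
    (hY0 : Y ≤ 0) (hχ0 : 0 ≤ χ) (hface : Y = ρ * (U - β * V)) :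
    -c * Y / D + (U - β * V) / D - ρ * (-c * U + U * χ * Y + W - β * Y) ≥ 0 :=
  face_Y_computation_general β c D ρ U V W χ Y hD hρ hroot hU0 hWcU hY0 hχ0 hface
end
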